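/- A graph G satisfies d_min(G) = 0 if and only if G admits a 2-good acyclic orientation, i.e., an orientation in which every cycle has at least 2 forward arcs and at least 2 backward arcs with respect to either traversal direction. -/

import Mathlib

variable {V : Type*}

/-- An orientation of a simple graph `G`: each edge gets exactly one direction. -/
structure Orient (G : SimpleGraph V) where
  dir : V → V → Prop
  dir_adj : ∀ u v, dir u v → G.Adj u v
  adj_dir : ∀ u v, G.Adj u v → dir u v ∨ dir v u
  asymm : ∀ u v, dir u v → ¬ dir v u

/-- The relation obtained from `dir` by reversing the single arc `u → v`. -/
def reverseArc (dir : V → V → Prop) (u v : V) : V → V → Prop :=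
  fun a b => (dir a b ∧ ¬(a = u ∧ b = v)) ∨ (a = v ∧ b = u)

/-- A relation is acyclic if there is no directed cycle. -/
def IsAcyclicRel (dir : V → V → Prop) : Prop :=
  ∀ u v, dir u v → ¬ Relation.ReflTransGen dir v u

/-- An arc `u → v` is dependent if its reversal creates a directed cycle. -/
def DependentArc (dir : V → V → Prop) (u v : V) : Prop :=
  dir u v ∧ ¬ IsAcyclicRel (reverseArc dir u v)

/-- A cover graph admits an acyclic orientation with no dependent arcs. -/
def IsCoverGraph (G : SimpleGraph V) : Prop :=
  ∃ D : Orient G, IsAcyclicRel D.dir ∧ ∀ u v, ¬ DependentArc D.dir u v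

/-- The number of dependent arcs of an orientation. -/
noncomputable def numDependent {G : SimpleGraph V} (D : Orient G) : ℕ :=
  Set.ncard {p : V × V | DependentArc D.dir p.1 p.2}

/-- `d_min`: minimum number of dependent arcs over all acyclic orientations. -/
noncomputable def dmin (G : SimpleGraph V) : ℕ :=
  sInf {n | ∃ D : Orient G, IsAcyclicRel D.dir ∧ numDependent D = n}

/-- `d_max`: maximum number of dependent arcs over all acyclic orientations. -/
noncomputable def dmax (G : SimpleGraph V) : ℕ :=
  sSup {n | ∃ D : Orient G, IsAcyclicRel D.dir ∧ numDependent D = n}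

/-- `c(G)`: minimum number of edges to delete from `G` to get a cover graph. -/
noncomputable def coverDeletion (G : SimpleGraph V) : ℕ :=
  sInf {n | ∃ F : Set (Sym2 V), F ⊆ G.edgeSet ∧ IsCoverGraph (G.deleteEdges F) ∧ F.ncard = n}

/-- The generalized Mycielski graph `M_m(G)`; `none` is the apex `u`,
`some (i, a)` is the vertex `⟨i, a⟩`. -/
def genMycielski (G : SimpleGraph V) (m : ℕ) : SimpleGraph (Option (Fin (m + 1) × V)) where
  Adj x y :=
    match x, y with
    | some (i, a), some (j, b) =>
        G.Adj a b ∧ ((i = j ∧ (i : ℕ) = 0) ∨ (i : ℕ) + 1 = (j : ℕ) ∨ (j : ℕ) + 1 = (i : ℕ))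
    | some (i, _), none => (i : ℕ) = m
    | none, some (j, _) => (j : ℕ) = m
    | none, none => False
  symm := by
    constructor
    rintro (_ | ⟨i, a⟩) (_ | ⟨j, b⟩) h
    · exact h
    · exact h
    · exact h
    · refine ⟨h.1.symm, ?_⟩
      rcases h.2 with ⟨h1, h2⟩ | h' | h'
      · exact Or.inl ⟨h1.symm, h1 ▸ h2⟩
      · exact Or.inr (Or.inr h')
      · exact Or.inr (Or.inl h')
  loopless := by
    constructor
    rintro (_ | ⟨i, a⟩) h <;> simp_all

/-- An orientation is 2-good if every cycle has at least two forward arcs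
and at least two backward arcs. -/
def TwoGood {G : SimpleGraph V} (dir : V → V → Prop) : Prop :=
  ∀ (v : V) (C : G.Walk v v), C.IsCycle →
    (∃ d₁ ∈ C.darts, ∃ d₂ ∈ C.darts, d₁ ≠ d₂ ∧
      dir d₁.toProd.1 d₁.toProd.2 ∧ dir d₂.toProd.1 d₂.toProd.2) ∧
    (∃ d₁ ∈ C.darts, ∃ d₂ ∈ C.darts, d₁ ≠ d₂ ∧
      dir d₁.toProd.2 d₁.toProd.1 ∧ dir d₂.toProd.2 d₂.toProd.1)

/-!
In an acyclic orientation, an arc `u → v` is dependent exactly when some directed `u`–`v` path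
avoids it. Such a path closes up with the arc to a cycle having a single forward arc, so a 2-good
acyclic orientation has no dependent arc. Conversely, pick any arc `d` on a cycle of an acyclic
orientation. If all other arcs of the cycle were forward, they would form a directed path from the
end of `d` back to its start (in the traversal direction); with `d` this is a directed cycle if
`d` is forward, and it makes the arc `d` dependent if `d` is backward. Applying this twice gives
two backward arcs on every cycle, and forward arcs are backward arcs of the reversed cycle.
Finally, the minimum defining `dmin` ranges over a nonempty set, since orienting along any linear
order is acyclic.
-/

open SimpleGraph Relation

def deleteArc (dir : V → V → Prop) (u v : V) : V → V → Prop :=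
  fun a b => dir a b ∧ ¬(a = u ∧ b = v)

section Relations

variable {r : V → V → Prop} {u v x y : V}

theorem reflTransGen_reverseArc_cases (h : ReflTransGen (reverseArc r u v) x y) :
    ReflTransGen (deleteArc r u v) x y ∨
      ReflTransGen (deleteArc r u v) x v ∧ ReflTransGen (deleteArc r u v) u y := by
  induction h using ReflTransGen.head_induction_on with
  | refl => exact Or.inl .refl
  | head hxz _ ih =>
    rcases hxz with hxz | ⟨rfl, rfl⟩
    · exact ih.imp (.head hxz) fun h => ⟨.head hxz h.1, h.2⟩
    · exact Or.inr ⟨.refl, ih.elim id And.right⟩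

theorem dependentArc_iff (hr : IsAcyclicRel r) :
    DependentArc r u v ↔ r u v ∧ ReflTransGen (deleteArc r u v) u v := by
  refine ⟨fun ⟨huv, hrev⟩ => ⟨huv, ?_⟩, fun ⟨huv, hpath⟩ => ⟨huv, fun hrev => ?_⟩⟩
  · simp only [IsAcyclicRel, not_forall, not_not] at hrev
    obtain ⟨a, b, hab, hba⟩ := hrev
    rcases hab with hab | ⟨rfl, rfl⟩ <;>
      rcases reflTransGen_reverseArc_cases hba with h | ⟨h₁, h₂⟩
    · exact absurd (ReflTransGen.mono (fun _ _ => And.left) _ _ h) (hr a b hab.1)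
    · exact h₂.trans (.head hab h₁)
    · exact h
    · exact h₁
  · exact hrev v u (Or.inr ⟨rfl, rfl⟩) (ReflTransGen.mono (fun _ _ => Or.inl) _ _ hpath)

theorem isAcyclicRel_of_lt [Preorder V] (h : ∀ a b, r a b → a < b) : IsAcyclicRel r := by
  intro a b hab hba
  have hle : ReflTransGen (· ≤ ·) b a := ReflTransGen.mono (fun x y hxy => (h x y hxy).le) _ _ hba
  rw [reflTransGen_eq_self] at hle
  exact (h a b hab).not_ge hle

end Relations

namespace SimpleGraph

variable {G : SimpleGraph V} {r : V → V → Prop}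

namespace Walk

theorem reflTransGen_of_forall_darts :
    ∀ {x y : V} (p : G.Walk x y), (∀ d ∈ p.darts, r d.fst d.snd) → ReflTransGen r x y
  | _, _, nil, _ => .refl
  | _, _, cons _ p, hp =>
    .head (hp _ List.mem_cons_self) (p.reflTransGen_of_forall_darts fun d hd =>
      hp d (List.mem_cons_of_mem _ hd))

theorem exists_eq_append_cons_of_mem_darts {u v : V} {d : G.Dart} :
    ∀ {p : G.Walk u v}, d ∈ p.darts →
      ∃ (q : G.Walk u d.fst) (q' : G.Walk d.snd v), p = q.append (cons d.adj q')
  | nil, hd => absurd hd List.not_mem_nil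
  | cons h p, hd => by
    rcases List.mem_cons.mp hd with rfl | hd
    · exact ⟨nil, p, rfl⟩
    · obtain ⟨q, q', rfl⟩ := exists_eq_append_cons_of_mem_darts hd
      exact ⟨cons h q, q', rfl⟩

theorem IsTrail.exists_walk_snd_fst_of_mem_darts {w : V} {C : G.Walk w w} (hC : C.IsTrail)
    {d : G.Dart} (hd : d ∈ C.darts) :
    ∃ q : G.Walk d.snd d.fst, q.darts ⊆ C.darts ∧ d.edge ∉ q.edges := by
  obtain ⟨p, p', rfl⟩ := exists_eq_append_cons_of_mem_darts hd
  have hnodup := hC.edges_nodup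
  simp only [edges_append, edges_cons, List.nodup_append, List.nodup_cons] at hnodup
  refine ⟨p'.append p, ?_, ?_⟩
  · intro e he
    simp only [darts_append, darts_cons, List.mem_append, List.mem_cons] at he ⊢
    tauto
  · simp only [edges_append, List.mem_append, not_or]
    exact ⟨hnodup.2.1.1, fun h => hnodup.2.2 _ h _ List.mem_cons_self rfl⟩

end Walk

theorem exists_isPath_of_reflTransGen (hr : ∀ a b, r a b → G.Adj a b) {x y : V}
    (h : ReflTransGen r x y) : ∃ p : G.Walk x y, p.IsPath ∧ ∀ d ∈ p.darts, r d.fst d.snd := by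
  suffices ∃ p : G.Walk x y, ∀ d ∈ p.darts, r d.fst d.snd by
    classical
    obtain ⟨p, hp⟩ := this
    exact ⟨p.bypass, p.bypass_isPath, fun d hd => hp d (p.darts_bypass_subset_darts hd)⟩
  induction h using ReflTransGen.head_induction_on with
  | refl => exact ⟨.nil, fun _ hd => absurd hd List.not_mem_nil⟩
  | head hab _ ih =>
    obtain ⟨p, hp⟩ := ih
    exact ⟨.cons (hr _ _ hab) p, fun d hd => (List.mem_cons.mp hd).elim (· ▸ hab) (hp d)⟩

end SimpleGraph

namespace Orient

def ofLinearOrder [LinearOrder V] (G : SimpleGraph V) : Orient G where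
  dir u v := G.Adj u v ∧ u < v
  dir_adj _ _ h := h.1
  adj_dir _ _ h := (lt_or_gt_of_ne h.ne).imp (⟨h, ·⟩) (⟨h.symm, ·⟩)
  asymm _ _ h h' := h.2.not_gt h'.2

theorem exists_isAcyclicRel (G : SimpleGraph V) : ∃ D : Orient G, IsAcyclicRel D.dir :=
  letI := IsWellOrder.linearOrder (@WellOrderingRel V)
  ⟨ofLinearOrder G, isAcyclicRel_of_lt fun _ _ h => h.2⟩

variable {G : SimpleGraph V} (D : Orient G)

theorem numDependent_eq_zero_iff [Finite V] :
    numDependent D = 0 ↔ ∀ u v, ¬ DependentArc D.dir u v := by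
  rw [numDependent, Set.ncard_eq_zero (Set.toFinite _), Set.eq_empty_iff_forall_notMem,
    Prod.forall]
  rfl

theorem not_dependentArc_of_twoGood (hac : IsAcyclicRel D.dir) (h2 : TwoGood (G := G) D.dir)
    (u v : V) : ¬ DependentArc D.dir u v := by
  intro hdep
  obtain ⟨huv, hpath⟩ := (dependentArc_iff hac).mp hdep
  have hadj := D.dir_adj u v huv
  obtain ⟨p, hp, hpd⟩ := exists_isPath_of_reflTransGen (fun a b h => D.dir_adj a b h.1) hpath
  have hedge : s(u, v) ∉ p.edges := by
    intro he
    obtain ⟨d, hd, hde⟩ := List.mem_map.mp he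
    rcases dart_edge_eq_mk'_iff'.mp hde with ⟨rfl, rfl⟩ | ⟨rfl, rfl⟩
    · exact (hpd d hd).2 ⟨rfl, rfl⟩
    · exact D.asymm _ _ huv (hpd d hd).1
  have hC : (Walk.cons hadj p.reverse).IsCycle :=
    (Walk.cons_isCycle_iff _ _).mpr ⟨hp.reverse, by simpa using hedge⟩
  obtain ⟨⟨d₁, hd₁, d₂, hd₂, hne, h₁, h₂⟩, -⟩ := h2 u _ hC
  -- all arcs of the path are backward on this cycle
  have hfwd : ∀ d ∈ (Walk.cons hadj p.reverse).darts, D.dir d.fst d.snd → d = ⟨(u, v), hadj⟩ := by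
    intro d hd hdir
    rcases List.mem_cons.mp hd with rfl | hd
    · rfl
    · exact absurd hdir (D.asymm _ _ (hpd d.symm (Walk.mem_darts_reverse.mp hd)).1)
  exact hne ((hfwd d₁ hd₁ h₁).trans (hfwd d₂ hd₂ h₂).symm)

variable {D}

theorem exists_backward_dart_ne (hac : IsAcyclicRel D.dir)
    (hnd : ∀ u v, ¬ DependentArc D.dir u v) {w : V} {C : G.Walk w w} (hC : C.IsTrail)
    {d : G.Dart} (hd : d ∈ C.darts) : ∃ e ∈ C.darts, e ≠ d ∧ D.dir e.snd e.fst := by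
  by_contra! hfwd
  obtain ⟨q, hqC, hdq⟩ := hC.exists_walk_snd_fst_of_mem_darts hd
  have hq : ReflTransGen (deleteArc D.dir d.snd d.fst) d.snd d.fst := by
    refine q.reflTransGen_of_forall_darts fun e he => ?_
    have hed : e.edge ≠ d.edge := fun h => hdq (h ▸ List.mem_map_of_mem he)
    refine ⟨(D.adj_dir _ _ e.adj).resolve_right (hfwd e (hqC he) ?_), ?_⟩
    · rintro rfl
      exact hed rfl
    · rintro ⟨h₁, h₂⟩
      exact hed (dart_edge_eq_mk'_iff'.mpr (Or.inr ⟨h₁, h₂⟩))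
  rcases D.adj_dir _ _ d.adj with hd' | hd'
  · exact hac _ _ hd' (ReflTransGen.mono (fun _ _ => And.left) _ _ hq)
  · exact hnd _ _ ((dependentArc_iff hac).mpr ⟨hd', hq⟩)

theorem exists_two_backward_darts (hac : IsAcyclicRel D.dir)
    (hnd : ∀ u v, ¬ DependentArc D.dir u v) {w : V} {C : G.Walk w w} (hC : C.IsTrail)
    (hne : ¬ C.Nil) :
    ∃ d₁ ∈ C.darts, ∃ d₂ ∈ C.darts, d₁ ≠ d₂ ∧ D.dir d₁.snd d₁.fst ∧ D.dir d₂.snd d₂.fst := by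
  obtain ⟨d, hd⟩ := List.exists_mem_of_ne_nil _ (Walk.darts_eq_nil.not.mpr hne)
  obtain ⟨d₁, hd₁, -, h₁⟩ := exists_backward_dart_ne hac hnd hC hd
  obtain ⟨d₂, hd₂, hne₂, h₂⟩ := exists_backward_dart_ne hac hnd hC hd₁
  exact ⟨d₁, hd₁, d₂, hd₂, hne₂.symm, h₁, h₂⟩

theorem twoGood_of_forall_not_dependentArc (hac : IsAcyclicRel D.dir)
    (hnd : ∀ u v, ¬ DependentArc D.dir u v) : TwoGood (G := G) D.dir := by
  intro w C hC
  refine ⟨?_, exists_two_backward_darts hac hnd hC.isTrail hC.not_nil⟩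
  obtain ⟨d₁, hd₁, d₂, hd₂, hne, h₁, h₂⟩ :=
    exists_two_backward_darts hac hnd hC.isTrail.reverse (by simpa using hC.not_nil)
  rw [Walk.mem_darts_reverse] at hd₁ hd₂
  exact ⟨d₁.symm, hd₁, d₂.symm, hd₂, Dart.symm_involutive.injective.ne hne, h₁, h₂⟩

theorem twoGood_iff_forall_not_dependentArc (hac : IsAcyclicRel D.dir) :
    TwoGood (G := G) D.dir ↔ ∀ u v, ¬ DependentArc D.dir u v :=
  ⟨D.not_dependentArc_of_twoGood hac, twoGood_of_forall_not_dependentArc hac⟩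

end Orient

theorem dmin_eq_zero_iff_twoGood [Finite V] (G : SimpleGraph V) :
    dmin G = 0 ↔ ∃ D : Orient G, IsAcyclicRel D.dir ∧ TwoGood (G := G) D.dir := by
  obtain ⟨D₀, hD₀⟩ := Orient.exists_isAcyclicRel G
  have hne : {n | ∃ D : Orient G, IsAcyclicRel D.dir ∧ numDependent D = n} ≠ ∅ :=
    Set.Nonempty.ne_empty ⟨_, D₀, hD₀, rfl⟩
  rw [dmin, Nat.sInf_eq_zero, or_iff_left hne]
  refine exists_congr fun D => and_congr_right fun hac => ?_
  rw [Orient.numDependent_eq_zero_iff, Orient.twoGood_iff_forall_not_dependentArc hac]
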